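/- Let C be a congruence on the semigroup I^cf_λ. If there exist two elements α, β of I^cf_λ that are not Green's H-equivalent (i.e., dom α ≠ dom β or ran α ≠ ran β) and satisfy α C β, then C is a group congruence on I^cf_λ, i.e., the quotient semigroup I^cf_λ/C is a group. -/

import Mathlib

/-!
`Icf ι` is an inverse monoid in which `f * f⁻¹` and `f⁻¹ * f` are the partial identities on
`dom f` and `ran f`, so `c` is a group congruence as soon as the partial identity `e_S` of every
cofinite `S` is `c`-related to `1`. These `S` form a filter, so it suffices to treat `S = {z}ᶜ`.
If `α c β` and, say, `x ∈ dom α \ dom β`, then `e_{dom α} = α α⁻¹` is related to `β α⁻¹`, which is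
undefined at `x`. As `ι` is infinite, there is an injection `g` of `ι` onto `dom α` with
`g z = x`; conjugation by `g` turns `e_{dom α}` into `1` and `β α⁻¹` into some `η` with `η c 1`
undefined at `z`, and then `e_{dom η} = η η⁻¹` is related to `1` with `dom η ⊆ {z}ᶜ`.
-/

open Function Set

namespace IcfPaper

variable {ι : Type*}

lemma trans_none_finite {f g : ι ≃. ι}
    (hf : {a | f a = none}.Finite) (hg : {b | g b = none}.Finite) :
    {a | (f.trans g) a = none}.Finite := by
  have hsub : {a | (f.trans g) a = none} ⊆
      {a | f a = none} ∪ ⋃ b ∈ {b | g b = none}, {a | f.symm b = some a} := by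
    intro a ha
    simp only [Set.mem_setOf_eq] at ha
    rcases hfa : f a with _ | b
    · exact Or.inl hfa
    · have hg' : g b = none := by
        have : (f.trans g) a = (f a).bind g := rfl
        rw [this, hfa] at ha
        exact ha
      refine Or.inr ?_
      refine Set.mem_biUnion hg' ?_
      exact (PEquiv.eq_some_iff f).2 hfa
  refine Set.Finite.subset (hf.union (hg.biUnion ?_)) hsub
  intro b _
  apply Set.Subsingleton.finite
  intro a1 h1 a2 h2
  simp only [Set.mem_setOf_eq] at h1 h2
  rw [h1] at h2
  exact Option.some_injective _ h2

/-- The monoid of injective partial selfmaps of `ι` with cofinite domain and range. -/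
def Icf (ι : Type*) : Type _ :=
  {f : ι ≃. ι // {a | f a = none}.Finite ∧ {b | f.symm b = none}.Finite}

namespace Icf

instance : Monoid (Icf ι) where
  mul f g := ⟨f.1.trans g.1, trans_none_finite f.2.1 g.2.1, by
      rw [PEquiv.symm_trans_rev]
      exact trans_none_finite g.2.2 f.2.2⟩
  one := ⟨PEquiv.refl ι, by
      constructor <;>
      · convert Set.finite_empty
        ext a
        simp only [Set.mem_setOf_eq, Set.mem_empty_iff_false, iff_false]
        intro h
        exact Option.some_ne_none a h⟩
  mul_assoc a b c := Subtype.ext (PEquiv.trans_assoc _ _ _)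
  one_mul a := Subtype.ext (PEquiv.refl_trans _)
  mul_one a := Subtype.ext (PEquiv.trans_refl _)

/-- The domain of an element of `Icf ι`. -/
def dom (f : Icf ι) : Set ι := {a | (f.1 a).isSome}

/-- The range of an element of `Icf ι`. -/
def ran (f : Icf ι) : Set ι := {b | (f.1.symm b).isSome}

/-- `d̄ f`, the number of points of `ι` outside of the domain of `f`. -/
noncomputable def dbar (f : Icf ι) : ℕ := (dom f)ᶜ.ncard

/-- `r̄ f`, the number of points of `ι` outside of the range of `f`. -/
noncomputable def rbar (f : Icf ι) : ℕ := (ran f)ᶜ.ncard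

end Icf

/-- The bicyclic semigroup `⟨p, q | pq = 1⟩`, realized as `ℕ × ℕ` with the operation
`(a,b)(c,d) = (a - b + max(b,c), d - c + max(b,c))`. -/
def Bicyclic : Type := ℕ × ℕ

instance : Mul Bicyclic :=
  ⟨fun x y => (x.1 - x.2 + max x.2 y.1, y.2 - y.1 + max x.2 y.1)⟩

open Filter PEquiv

lemma _root_.PEquiv.trans_apply {α β γ : Type*} (f : α ≃. β) (g : β ≃. γ) (a : α) :
    f.trans g a = (f a).bind g := rfl

lemma _root_.PEquiv.ofSet_apply {α : Type*} (S : Set α) [DecidablePred (· ∈ S)] (a : α) :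
    PEquiv.ofSet S a = if a ∈ S then some a else none := rfl

namespace Icf

@[ext]
lemma ext {f g : Icf ι} (h : ∀ a, f.1 a = g.1 a) : f = g :=
  Subtype.ext (PEquiv.ext h)

@[simp] lemma val_mul (f g : Icf ι) : (f * g).1 = f.1.trans g.1 := rfl

@[simp] lemma val_one : (1 : Icf ι).1 = PEquiv.refl ι := rfl

instance : Inv (Icf ι) := ⟨fun f => ⟨f.1.symm, f.2.2, f.2.1⟩⟩

@[simp] lemma val_inv (f : Icf ι) : f⁻¹.1 = f.1.symm := rfl

lemma compl_dom_finite (f : Icf ι) : (dom f)ᶜ.Finite := by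
  simpa [dom, Set.compl_def] using f.2.1

lemma compl_ran_finite (f : Icf ι) : (ran f)ᶜ.Finite := by
  simpa [ran, Set.compl_def] using f.2.2

open Classical in
noncomputable def ofSet (S : Set ι) (hS : Sᶜ.Finite) : Icf ι :=
  ⟨PEquiv.ofSet S, by simpa [ofSet_apply, Set.compl_def] using hS,
    by simpa [ofSet_apply, Set.compl_def] using hS⟩

open Classical in
lemma val_ofSet (S : Set ι) (hS : Sᶜ.Finite) : (ofSet S hS).1 = PEquiv.ofSet S := rfl

lemma ofSet_univ (h : (Set.univ : Set ι)ᶜ.Finite) : ofSet Set.univ h = 1 :=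
  Subtype.ext (by simp [val_ofSet])

lemma ofSet_mul_ofSet {S T : Set ι} (hS : Sᶜ.Finite) (hT : Tᶜ.Finite) :
    ofSet S hS * ofSet T hT = ofSet (S ∩ T) (by simpa [Set.compl_inter] using hS.union hT) := by
  ext a : 1
  by_cases haS : a ∈ S <;> by_cases haT : a ∈ T <;>
    simp [val_ofSet, trans_apply, ofSet_apply, haS, haT]

lemma ofSet_mul_ofSet_of_subset {S T : Set ι} {hS : Sᶜ.Finite} {hT : Tᶜ.Finite} (hST : S ⊆ T) :
    ofSet T hT * ofSet S hS = ofSet S hS := by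
  rw [ofSet_mul_ofSet]
  congr 1
  exact inter_eq_right.2 hST

lemma mul_inv_self (f : Icf ι) : f * f⁻¹ = ofSet (dom f) (compl_dom_finite f) :=
  Subtype.ext (by rw [val_mul, val_inv, self_trans_symm, val_ofSet]; congr)

lemma inv_mul_self (f : Icf ι) : f⁻¹ * f = ofSet (ran f) (compl_ran_finite f) :=
  Subtype.ext (by rw [val_mul, val_inv, symm_trans_self, val_ofSet]; congr)

lemma mul_inv_mul_self (f : Icf ι) : f * f⁻¹ * f = f := by
  ext a : 1
  rcases hfa : f.1 a with _ | b
  · simp [trans_apply, hfa]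
  · simp [trans_apply, hfa, (eq_some_iff f.1).2 hfa]

noncomputable def ofInjective (g : ι → ι) (hg : Injective g) (hrange : (range g)ᶜ.Finite) :
    Icf ι :=
  ⟨{ toFun a := some (g a)
     invFun := partialInv g
     inv a b := (hg.isPartialInv a b).trans Option.some_inj.symm },
    by simp,
    hrange.subset fun b hb ⟨a, hab⟩ => by
      subst hab
      exact Option.some_ne_none a ((partialInv_left hg a).symm.trans hb)⟩

lemma val_ofInjective_apply (g : ι → ι) (hg : Injective g) (hrange : (range g)ᶜ.Finite) (a : ι) :
    (ofInjective g hg hrange).1 a = some (g a) := rfl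

lemma ofInjective_mul_ofSet_range_mul_inv (g : ι → ι) (hg : Injective g)
    (hrange : (range g)ᶜ.Finite) :
    ofInjective g hg hrange * ofSet (range g) hrange * (ofInjective g hg hrange)⁻¹ = 1 := by
  ext a : 1
  simp [trans_apply, val_ofInjective_apply, val_ofSet, ofSet_apply,
    (eq_some_iff _).2 (val_ofInjective_apply g hg hrange a)]

end Icf

lemma exists_injective_range_eq [Infinite ι] {A : Set ι} (hA : Aᶜ.Finite) {x : ι} (hx : x ∈ A)
    (z : ι) : ∃ g : ι → ι, Injective g ∧ range g = A ∧ g z = x := by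
  classical
  have hcard : Cardinal.mk ↥Aᶜᶜ = Cardinal.mk ι :=
    Cardinal.mk_compl_of_infinite _ (hA.lt_aleph0.trans_le (Cardinal.aleph0_le_mk ι))
  rw [compl_compl] at hcard
  obtain ⟨e⟩ := Cardinal.eq.1 hcard
  let e' := e.symm.trans (Equiv.swap (e.symm z) ⟨x, hx⟩)
  refine ⟨Subtype.val ∘ e', Subtype.val_injective.comp e'.injective, ?_, by simp [e']⟩
  rw [range_comp, e'.range_eq_univ, image_univ, Subtype.range_coe]

lemma Con.exists_mul_eq_one_of_rel_one {M : Type*} [Monoid M] (c : Con M) (g : M → M)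
    (h : ∀ x, c (x * g x) 1 ∧ c (g x * x) 1) (q : c.Quotient) :
    ∃ r : c.Quotient, q * r = 1 ∧ r * q = 1 := by
  induction q using Con.induction_on with
  | H x => exact ⟨g x, c.eq.2 (h x).1, c.eq.2 (h x).2⟩

namespace Icf

def filterOfCon (c : Con (Icf ι)) : Filter ι where
  sets := {S | ∃ hS : Sᶜ.Finite, c (ofSet S hS) 1}
  univ_sets := ⟨by simp, by rw [ofSet_univ]; exact c.refl 1⟩
  sets_of_superset := by
    rintro S T ⟨hS, hrel⟩ hST
    have hT : Tᶜ.Finite := hS.subset (compl_subset_compl.2 hST)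
    refine ⟨hT, c.trans (c.symm ?_) hrel⟩
    simpa [ofSet_mul_ofSet_of_subset hST] using c.mul (c.refl (ofSet T hT)) hrel
  inter_sets := by
    rintro S T ⟨hS, hSrel⟩ ⟨hT, hTrel⟩
    have h := c.mul hSrel hTrel
    rw [ofSet_mul_ofSet, one_mul] at h
    exact ⟨_, h⟩

variable {c : Con (Icf ι)}

lemma rel_one_of_mem_filterOfCon {S : Set ι} (h : S ∈ filterOfCon c) (hS : Sᶜ.Finite) :
    c (ofSet S hS) 1 :=
  h.2

lemma inv_rel_one {η : Icf ι} (h : c η 1) : c η⁻¹ 1 := by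
  have h₁ : c (η * η⁻¹) η⁻¹ := by simpa using c.mul h (c.refl η⁻¹)
  have h₂ : c η η⁻¹ := by simpa [mul_inv_mul_self] using c.mul h₁ h
  exact c.trans (c.symm h₂) h

lemma dom_mem_filterOfCon {η : Icf ι} (h : c η 1) : dom η ∈ filterOfCon c :=
  ⟨compl_dom_finite η, by simpa [mul_inv_self] using c.mul h (inv_rel_one h)⟩

lemma ran_mem_filterOfCon {η : Icf ι} (h : c η 1) : ran η ∈ filterOfCon c :=
  ⟨compl_ran_finite η, by simpa [inv_mul_self] using c.mul (inv_rel_one h) h⟩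

lemma conj_rel_one_of_rel_ofSet_range {g : ι → ι} (hg : Injective g) {hrange : (range g)ᶜ.Finite}
    {τ : Icf ι} (hrel : c (ofSet (range g) hrange) τ) :
    c (ofInjective g hg hrange * τ * (ofInjective g hg hrange)⁻¹) 1 := by
  have h := c.mul (c.mul (c.refl (ofInjective g hg hrange)) hrel)
    (c.refl (ofInjective g hg hrange)⁻¹)
  rw [ofInjective_mul_ofSet_range_mul_inv] at h
  exact c.symm h

section Infinite

variable [Infinite ι]

lemma compl_singleton_mem_filterOfCon_of_apply_eq_none {A : Set ι} {hA : Aᶜ.Finite} {τ : Icf ι}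
    (hrel : c (ofSet A hA) τ) {x : ι} (hx : x ∈ A) (hτ : τ.1 x = none) (z : ι) :
    {z}ᶜ ∈ filterOfCon c := by
  obtain ⟨g, hg, rfl, hgz⟩ := exists_injective_range_eq hA hx z
  refine mem_of_superset (dom_mem_filterOfCon (conj_rel_one_of_rel_ofSet_range hg hrel)) ?_
  rintro a ha rfl
  simp [dom, trans_apply, val_ofInjective_apply, hgz, hτ] at ha

lemma compl_singleton_mem_filterOfCon_of_symm_apply_eq_none {A : Set ι} {hA : Aᶜ.Finite}
    {τ : Icf ι} (hrel : c (ofSet A hA) τ) {x : ι} (hx : x ∈ A) (hτ : τ.1.symm x = none) (z : ι) :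
    {z}ᶜ ∈ filterOfCon c := by
  obtain ⟨g, hg, rfl, hgz⟩ := exists_injective_range_eq hA hx z
  refine mem_of_superset (ran_mem_filterOfCon (conj_rel_one_of_rel_ofSet_range hg hrel)) ?_
  rintro a ha rfl
  simp [ran, symm_trans_rev, trans_apply, val_ofInjective_apply, hgz, hτ] at ha

lemma compl_singleton_mem_filterOfCon_of_dom_ne {α β : Icf ι} (hαβ : c α β) (hne : dom α ≠ dom β)
    (z : ι) : {z}ᶜ ∈ filterOfCon c := by
  wlog hx : ∃ x ∈ dom α, x ∉ dom β generalizing α β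
  · obtain ⟨x, hx'⟩ := Set.symmDiff_nonempty.2 hne
    rcases Set.mem_symmDiff.1 hx' with h | h
    · exact absurd ⟨x, h⟩ hx
    · exact this (c.symm hαβ) hne.symm ⟨x, h⟩
  obtain ⟨x, hxα, hxβ⟩ := hx
  have hrel : c (ofSet (dom α) (compl_dom_finite α)) (β * α⁻¹) := by
    simpa [mul_inv_self] using c.mul hαβ (c.refl α⁻¹)
  have hβx : β.1 x = none := by simpa [dom] using hxβ
  exact compl_singleton_mem_filterOfCon_of_apply_eq_none hrel hxα (by simp [trans_apply, hβx]) z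

lemma compl_singleton_mem_filterOfCon_of_ran_ne {α β : Icf ι} (hαβ : c α β) (hne : ran α ≠ ran β)
    (z : ι) : {z}ᶜ ∈ filterOfCon c := by
  wlog hx : ∃ x ∈ ran α, x ∉ ran β generalizing α β
  · obtain ⟨x, hx'⟩ := Set.symmDiff_nonempty.2 hne
    rcases Set.mem_symmDiff.1 hx' with h | h
    · exact absurd ⟨x, h⟩ hx
    · exact this (c.symm hαβ) hne.symm ⟨x, h⟩
  obtain ⟨x, hxα, hxβ⟩ := hx
  have hrel : c (ofSet (ran α) (compl_ran_finite α)) (α⁻¹ * β) := by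
    simpa [inv_mul_self] using c.mul (c.refl α⁻¹) hαβ
  have hβx : β.1.symm x = none := by simpa [ran] using hxβ
  exact compl_singleton_mem_filterOfCon_of_symm_apply_eq_none hrel hxα
    (by simp [symm_trans_rev, trans_apply, hβx]) z

end Infinite

end Icf

open Icf in
/-- If a congruence on `Icf ι` identifies two non-`H`-equivalent elements, then it is a
group congruence. -/
theorem statement13 {ι : Type*} [Infinite ι] (c : Con (Icf ι))
    (h : ∃ α β : Icf ι, c α β ∧ ¬(Icf.dom α = Icf.dom β ∧ Icf.ran α = Icf.ran β)) :
    ∀ x : c.Quotient, ∃ y : c.Quotient, x * y = 1 ∧ y * x = 1 := by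
  obtain ⟨α, β, hαβ, hne⟩ := h
  have hsingleton : ∀ z : ι, {z}ᶜ ∈ filterOfCon c := by
    rcases not_and_or.1 hne with hdom | hran
    · exact compl_singleton_mem_filterOfCon_of_dom_ne hαβ hdom
    · exact compl_singleton_mem_filterOfCon_of_ran_ne hαβ hran
  have hcofinite : filterOfCon c ≤ cofinite := le_cofinite_iff_compl_singleton_mem.2 hsingleton
  refine Con.exists_mul_eq_one_of_rel_one c (·⁻¹) fun f => ⟨?_, ?_⟩
  · rw [mul_inv_self]
    exact rel_one_of_mem_filterOfCon (hcofinite (compl_dom_finite f)) _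
  · rw [inv_mul_self]
    exact rel_one_of_mem_filterOfCon (hcofinite (compl_ran_finite f)) _

end IcfPaper
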